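/- arXiv:2005.12904 — 4 statements merged into one kernel-verified Lean document; each statement's English description precedes it below -/
import Mathlib

section
/- Let q, m, n, B, C be positive integers with 2·m·C·B < q. Let A be an m×n matrix over ℤ/qℤ such that the linear map s ↦ A·s from (ℤ/qℤ)^n to (ℤ/qℤ)^m is injective, and let T be an m×m integer matrix with nonzero determinant, all of whose entries have absolute value at most C, and such that T̄·A = 0 over ℤ/qℤ, where T̄ denotes the entrywise reduction of T modulo q. Then for all s, s' ∈ (ℤ/qℤ)^n and all integer vectors e, e' ∈ ℤ^m with |e_i| ≤ B and |e'_i| ≤ B for every i, if A·s + ē = A·s' + ē' in (ℤ/qℤ)^m (where ē denotes the entrywise reduction of e modulo q), then s = s' and e = e'. -/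
/-- Perfectly correct lattice-trapdoor inversion (uniqueness part): if `2·m·C·B < q`,
`A` is an `m × n` matrix over `ℤ/qℤ` with `s ↦ A·s` injective, and `T` is an `m × m`
integer trapdoor matrix with nonzero determinant, entries bounded by `C`, and
`T̄·A = 0` over `ℤ/qℤ`, then a dual-Regev style ciphertext `A·s + ē` with noise
bound `B` uniquely determines `(s, e)`. -/
theorem trapdoor_inversion_unique
    (q m n B C : ℕ) (hq : 0 < q) (hm : 0 < m) (hn : 0 < n) (hB : 0 < B) (hC : 0 < C)
    (hlt : 2 * m * C * B < q)
    (A : Matrix (Fin m) (Fin n) (ZMod q))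
    (hA : Function.Injective (fun s : Fin n → ZMod q => A.mulVec s))
    (T : Matrix (Fin m) (Fin m) ℤ)
    (hTdet : T.det ≠ 0)
    (hTC : ∀ i j, |T i j| ≤ (C : ℤ))
    (hTA : (T.map (Int.cast : ℤ → ZMod q)) * A = 0) :
    ∀ (s s' : Fin n → ZMod q) (e e' : Fin m → ℤ),
      (∀ i, |e i| ≤ (B : ℤ)) → (∀ i, |e' i| ≤ (B : ℤ)) →
      (A.mulVec s + fun i => ((e i : ZMod q))) =
        (A.mulVec s' + fun i => ((e' i : ZMod q))) →
      s = s' ∧ e = e' := by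
  intro s s' e e' he he' h
  set d : Fin m → ℤ := fun i => e' i - e i with hd
  have hbd : ∀ i, |d i| ≤ 2 * B := by
    intro i
    have h1 := he i
    have h2 := he' i
    have h3 : |e' i - e i| ≤ |e' i| + |e i| := abs_sub _ _
    simp only [hd]
    linarith
  -- A (s - s') = cast of d
  have h1 : A.mulVec (s - s') = fun i => ((d i : ZMod q)) := by
    funext i
    have := congrFun h i
    simp only [Pi.add_apply] at this
    have h4 : A.mulVec (s - s') i = A.mulVec s i - A.mulVec s' i := by
      rw [Matrix.mulVec_sub]; rfl
    simp only [hd]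
    push_cast
    rw [h4]
    linear_combination this
  -- cast of T.mulVec d is 0
  have h2 : ∀ i, ((T.mulVec d i : ℤ) : ZMod q) = 0 := by
    intro i
    have key : (T.map (Int.cast : ℤ → ZMod q)).mulVec (A.mulVec (s - s')) = 0 := by
      rw [Matrix.mulVec_mulVec, hTA, Matrix.zero_mulVec]
    have := congrFun key i
    rw [h1] at this
    simp only [Matrix.mulVec, dotProduct, Matrix.map_apply, Pi.zero_apply] at this
    rw [Matrix.mulVec]
    simp only [dotProduct]
    push_cast
    exact this
  -- integer vector T.mulVec d is 0
  have h3 : ∀ i, T.mulVec d i = 0 := by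
    intro i
    have hdvd : (q : ℤ) ∣ T.mulVec d i := by
      have := h2 i
      exact (ZMod.intCast_zmod_eq_zero_iff_dvd _ q).mp this
    refine Int.eq_zero_of_abs_lt_dvd hdvd ?_
    have hb : |T.mulVec d i| ≤ ∑ j : Fin m, |T i j * d j| := by
      rw [Matrix.mulVec]
      exact Finset.abs_sum_le_sum_abs _ _
    have hb2 : ∑ j : Fin m, |T i j * d j| ≤ ∑ j : Fin m, (C : ℤ) * (2 * B) := by
      refine Finset.sum_le_sum fun j _ => ?_
      rw [abs_mul]
      exact mul_le_mul (hTC i j) (hbd j) (abs_nonneg _) (by positivity)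
    have : (∑ j : Fin m, (C : ℤ) * (2 * B)) = m * C * (2 * B) := by
      rw [Finset.sum_const]
      simp [mul_assoc]
    have hlt' : (2 * m * C * B : ℤ) < q := by exact_mod_cast hlt
    calc |T.mulVec d i| ≤ m * C * (2 * B) := by
          rw [← this]; exact hb.trans hb2
      _ = 2 * m * C * B := by ring
      _ < q := hlt'
  -- d = 0 since det T ≠ 0
  have hd0 : d = 0 := by
    have hTd : T.mulVec d = 0 := funext h3
    have := congrArg (fun v => T.adjugate.mulVec v) hTd
    simp only [Matrix.mulVec_mulVec, Matrix.adjugate_mul, Matrix.smul_mulVec,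
      Matrix.one_mulVec, Matrix.mulVec_zero] at this
    funext j
    have hj := congrFun this j
    simp only [Pi.smul_apply, smul_eq_mul, Pi.zero_apply] at hj
    exact (mul_eq_zero.mp hj).resolve_left hTdet
  have hee' : e = e' := by
    funext i
    have := congrFun hd0 i
    simp only [hd, Pi.zero_apply] at this
    linarith
  refine ⟨?_, hee'⟩
  have hz : A.mulVec (s - s') = A.mulVec 0 := by
    rw [h1, Matrix.mulVec_zero]
    funext i
    rw [hd0]
    simp
  have := hA hz
  rwa [sub_eq_zero] at this
end

section
/- Let q, m, n, B, C be positive integers with 2·m·C·B < q. Let A be an m×n matrix over ℤ/qℤ and let T be an m×m integer matrix all of whose entries have absolute value at most C, such that T̄·A = 0 over ℤ/qℤ, where T̄ denotes the entrywise reduction of T modulo q. For any s ∈ (ℤ/qℤ)^n and any integer vector e ∈ ℤ^m with |e_i| ≤ B for every i, set v := A·s + ē ∈ (ℤ/qℤ)^m (ē the entrywise reduction of e modulo q). Then for every index i, the minimal-absolute-value representative of the i-th entry of T̄·v equals the i-th entry of the integer vector T·e; consequently, if det T ≠ 0, the noise vector e (and, when s ↦ A·s is injective, also s) is exactly recoverable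 from v by computing T̄·v, lifting each entry to its minimal-absolute-value representative, and applying T⁻¹ over the rationals. -/
/-- Correctness of the trapdoor inversion procedure: if `2·m·C·B < q`, `T` is an `m × m`
integer matrix with entries bounded by `C` satisfying `T̄·A = 0` over `ℤ/qℤ`, and
`v = A·s + ē` with `‖e‖∞ ≤ B`, then for every index `i` the minimal-absolute-value
representative of the `i`-th entry of `T̄·v` equals the `i`-th entry of the integer
vector `T·e`; consequently, if `det T ≠ 0`, the noise `e` is exactly recovered by
computing `T̄·v`, lifting entrywise to minimal-absolute-value representatives, and
applying `T⁻¹` over the rationals, and (when `s ↦ A·s` is injective) `s` is the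
unique preimage of `v − ē` under `A`. -/
theorem trapdoor_inversion_correct
    (q m n B C : ℕ) (hq : 0 < q) (hm : 0 < m) (hn : 0 < n) (hB : 0 < B) (hC : 0 < C)
    (hlt : 2 * m * C * B < q)
    (A : Matrix (Fin m) (Fin n) (ZMod q))
    (T : Matrix (Fin m) (Fin m) ℤ)
    (hTC : ∀ i j, |T i j| ≤ (C : ℤ))
    (hTA : (T.map (Int.cast : ℤ → ZMod q)) * A = 0)
    (s : Fin n → ZMod q) (e : Fin m → ℤ) (he : ∀ i, |e i| ≤ (B : ℤ))
    (v : Fin m → ZMod q)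
    (hv : v = A.mulVec s + fun i => ((e i : ZMod q))) :
    (∀ i : Fin m,
        (((T.map (Int.cast : ℤ → ZMod q)).mulVec v) i).valMinAbs = T.mulVec e i) ∧
    (T.det ≠ 0 →
      ((T.map (Int.cast : ℤ → ℚ))⁻¹).mulVec
          (fun i => ((((T.map (Int.cast : ℤ → ZMod q)).mulVec v) i).valMinAbs : ℚ)) =
        fun i => ((e i : ℚ))) ∧
    (T.det ≠ 0 → Function.Injective (fun z : Fin n → ZMod q => A.mulVec z) →
      ∀ s' : Fin n → ZMod q,
        A.mulVec s' = v - (fun i => ((e i : ZMod q))) → s' = s) := by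
  haveI : NeZero q := ⟨hq.ne'⟩
  -- T̄ · v = cast of T · e
  have hcast : ∀ i : Fin m,
      ((T.map (Int.cast : ℤ → ZMod q)).mulVec v) i = ((T.mulVec e i : ℤ) : ZMod q) := by
    intro i
    have h1 : (T.map (Int.cast : ℤ → ZMod q)).mulVec v =
        (T.map (Int.cast : ℤ → ZMod q)).mulVec (A.mulVec s)
          + (T.map (Int.cast : ℤ → ZMod q)).mulVec (fun i => ((e i : ZMod q))) := by
      rw [hv, Matrix.mulVec_add]
    have h2 : (T.map (Int.cast : ℤ → ZMod q)).mulVec (A.mulVec s) = 0 := by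
      rw [Matrix.mulVec_mulVec, hTA, Matrix.zero_mulVec]
    rw [h1, h2, zero_add]
    simp only [Matrix.mulVec, dotProduct, Matrix.map_apply, Int.cast_sum,
      Int.cast_mul]
  -- bound on the entries of T · e
  have hbound : ∀ i : Fin m, |T.mulVec e i| ≤ (m : ℤ) * C * B := by
    intro i
    calc |T.mulVec e i| = |∑ j, T i j * e j| := rfl
      _ ≤ ∑ j, |T i j * e j| := Finset.abs_sum_le_sum_abs _ _
      _ ≤ ∑ _j : Fin m, (C : ℤ) * B := by
          apply Finset.sum_le_sum
          intro j _
          rw [abs_mul]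
          exact mul_le_mul (hTC i j) (he j) (abs_nonneg _) (by positivity)
      _ = (m : ℤ) * C * B := by
          simp [Finset.sum_const, mul_assoc]
  have hmain : ∀ i : Fin m,
      (((T.map (Int.cast : ℤ → ZMod q)).mulVec v) i).valMinAbs = T.mulVec e i := by
    intro i
    rw [ZMod.valMinAbs_spec]
    refine ⟨hcast i, ?_, ?_⟩
    · have := hbound i
      have h2 : (2 : ℤ) * m * C * B < q := by exact_mod_cast hlt
      have := abs_le.1 this
      nlinarith [this.1, this.2]
    · have := (abs_le.1 (hbound i)).2
      have h2 : (2 : ℤ) * m * C * B < q := by exact_mod_cast hlt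
      nlinarith
  refine ⟨hmain, ?_, ?_⟩
  · intro hdet
    have hdetQ : IsUnit (T.map (Int.cast : ℤ → ℚ)).det := by
      have hd : (T.map (Int.cast : ℤ → ℚ)).det = ((T.det : ℤ) : ℚ) :=
        (RingHom.map_det (Int.castRingHom ℚ) T).symm
      rw [hd, isUnit_iff_ne_zero, ne_eq, Int.cast_eq_zero]
      exact hdet
    have hvec : (fun i => ((((T.map (Int.cast : ℤ → ZMod q)).mulVec v) i).valMinAbs : ℚ)) =
        (T.map (Int.cast : ℤ → ℚ)).mulVec (fun i => ((e i : ℚ))) := by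
      funext i
      rw [hmain i]
      simp only [Matrix.mulVec, dotProduct, Matrix.map_apply, Int.cast_sum,
        Int.cast_mul]
    rw [hvec, Matrix.mulVec_mulVec, Matrix.nonsing_inv_mul _ hdetQ, Matrix.one_mulVec]
  · intro _ hinj s' hs'
    apply hinj
    show A.mulVec s' = A.mulVec s
    rw [hs', hv]
    abel
end

section
/- Let q be a positive even integer and let t, ℓ, m, n, k be natural numbers and B a nonnegative integer. For each i ∈ Fin t, let B_i be an m×n matrix over ℤ/qℤ and b_i ∈ (ℤ/qℤ)^n, and let A_i be the (m+1)×n matrix over ℤ/qℤ whose first m rows are B_i and whose last row is b_iᵀ. Fix an integer vector g ∈ ℤ^k. For each i ∈ Fin t and j ∈ Fin ℓ, suppose given: an n×k matrix S_{i,j} over ℤ/qℤ; an (m+1)×k integer matrix E_{i,j} all of whose entries have absolute value at most B; scalars μ_{i,j}, a_{i,j} ∈ ℤ/qℤ; and an integer vector x_{i,j} ∈ {0,1}^k with ⟨g, x_{i,j}⟩ ≡ a_{i,j} (mod q). Let G be the (m+1)×k matrix over ℤ/qℤ whose first m rows are zero and whose last row is the reduction of g modulo q, and set C_{i,j} :=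 A_i·S_{i,j} + Ē_{i,j} + μ_{i,j}·G (bars denote entrywise reduction modulo q). Suppose moreover that β ∈ {0,1} and e' ∈ ℤ satisfy ∑_{i∈Fin t, j∈Fin ℓ} a_{i,j}·μ_{i,j} = (q/2)·β + ē' in ℤ/qℤ. Define w ∈ (ℤ/qℤ)^{t·m+1} by letting, for each i ∈ Fin t, the i-th block of m entries of w be the first m entries of ∑_{j∈Fin ℓ} C_{i,j}·x̄_{i,j}, and letting the last entry of w be ∑_{i∈Fin t} (last entry of ∑_{j∈Fin ℓ} C_{i,j}·x̄_{i,j}). Then there exist s* ∈ (ℤ/qℤ)^{t·n}, whose i-th block equals ∑_{j∈Fin ℓ} S_{i,j}·x̄_{i,j}, and an integer vector e* ∈ ℤ^{t·m+1}, such that w = Â·s* + ē* + (q/2)·β·u, where Â is the (t·m+1)×(t·n) matrix over ℤ/qℤ whose top t·m rows form the block-diagonal matrix with diagonal blocks B_1, …, B_t and whose last row is the concatenation (b_1ᵀ, …, b_tᵀ), u is the standard basis vector supported on the last coordinate, every entry of e* other than the last has absolute value at most ℓ·k·B, and the last entry of e* has absolute value at most t·ℓ·k·B + |e'|. -/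
/-- Key-switching Convert procedure for multi-key dual-Regev: applying the coefficients
`a i j` of a nearly linear decryption relation `∑ aᵢⱼ·μᵢⱼ = (q/2)·β + e' (mod q)` to
dual-GSW-style ciphertexts `C i j = Aᵢ·Sᵢⱼ + Ēᵢⱼ + μᵢⱼ·G` (with bounded integer noise)
via the binary decompositions `x i j` of the `a i j` produces a multi-key dual-Regev
ciphertext `w = Â·s* + ē* + (q/2)·β·u` under the block-diagonal expanded public key `Â`,
with all noise entries except the last bounded by `ℓ·k·B` and the last bounded by
`t·ℓ·k·B + |e'|`.  Blocks of length `m` are indexed by `Fin t × Fin m` and the final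
coordinate by `Sum.inr ()`, so that vectors over `(Fin t × Fin m) ⊕ Unit` are vectors
of dimension `t·m + 1`. -/
theorem convert_produces_dualRegev_ciphertext
    (q : ℕ) (hq : 0 < q) (hqe : Even q)
    (t ℓ m n k : ℕ) (B : ℕ)
    (Bmat : Fin t → Matrix (Fin m) (Fin n) (ZMod q))
    (bvec : Fin t → Fin n → ZMod q)
    (A : Fin t → Matrix (Fin (m + 1)) (Fin n) (ZMod q))
    (hA1 : ∀ (i : Fin t) (r : Fin m) (c : Fin n), A i r.castSucc c = Bmat i r c)
    (hA2 : ∀ (i : Fin t) (c : Fin n), A i (Fin.last m) c = bvec i c)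
    (g : Fin k → ℤ)
    (S : Fin t → Fin ℓ → Matrix (Fin n) (Fin k) (ZMod q))
    (E : Fin t → Fin ℓ → Matrix (Fin (m + 1)) (Fin k) ℤ)
    (hE : ∀ (i : Fin t) (j : Fin ℓ) (r : Fin (m + 1)) (c : Fin k), |E i j r c| ≤ (B : ℤ))
    (μ a : Fin t → Fin ℓ → ZMod q)
    (x : Fin t → Fin ℓ → Fin k → ℤ)
    (hx01 : ∀ (i : Fin t) (j : Fin ℓ) (c : Fin k), x i j c = 0 ∨ x i j c = 1)
    (hgx : ∀ (i : Fin t) (j : Fin ℓ), ((∑ c, g c * x i j c : ℤ) : ZMod q) = a i j)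
    (G : Matrix (Fin (m + 1)) (Fin k) (ZMod q))
    (hG1 : ∀ (r : Fin m) (c : Fin k), G r.castSucc c = 0)
    (hG2 : ∀ c : Fin k, G (Fin.last m) c = ((g c : ℤ) : ZMod q))
    (C : Fin t → Fin ℓ → Matrix (Fin (m + 1)) (Fin k) (ZMod q))
    (hC : ∀ (i : Fin t) (j : Fin ℓ),
      C i j = A i * S i j + (E i j).map (Int.cast : ℤ → ZMod q) + μ i j • G)
    (β : ℤ) (hβ : β = 0 ∨ β = 1) (e' : ℤ)
    (hdec : (∑ i, ∑ j, a i j * μ i j) = (((q : ℤ) / 2 * β + e' : ℤ) : ZMod q))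
    (w : (Fin t × Fin m) ⊕ Unit → ZMod q)
    (hw1 : ∀ (i : Fin t) (r : Fin m),
      w (Sum.inl (i, r)) =
        (∑ j, (C i j).mulVec (fun c => ((x i j c : ℤ) : ZMod q))) r.castSucc)
    (hw2 : w (Sum.inr ()) =
      ∑ i, (∑ j, (C i j).mulVec (fun c => ((x i j c : ℤ) : ZMod q))) (Fin.last m))
    (Ahat : Matrix ((Fin t × Fin m) ⊕ Unit) (Fin t × Fin n) (ZMod q))
    (hAhat1 : ∀ (i : Fin t) (r : Fin m) (i' : Fin t) (c : Fin n),
      Ahat (Sum.inl (i, r)) (i', c) = if i' = i then Bmat i r c else 0)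
    (hAhat2 : ∀ (i' : Fin t) (c : Fin n), Ahat (Sum.inr ()) (i', c) = bvec i' c) :
    ∃ (sstar : Fin t × Fin n → ZMod q) (estar : (Fin t × Fin m) ⊕ Unit → ℤ),
      (∀ (i : Fin t) (c : Fin n),
        sstar (i, c) = (∑ j, (S i j).mulVec (fun cc => ((x i j cc : ℤ) : ZMod q))) c) ∧
      w = Ahat.mulVec sstar + (fun r => ((estar r : ZMod q))) +
            (fun r => if r = Sum.inr () then (((q : ℤ) / 2 * β : ℤ) : ZMod q) else 0) ∧
      (∀ (i : Fin t) (r : Fin m), |estar (Sum.inl (i, r))| ≤ ((ℓ * k * B : ℕ) : ℤ)) ∧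
      |estar (Sum.inr ())| ≤ ((t * ℓ * k * B : ℕ) : ℤ) + |e'| := by
    classical
  set xb : Fin t → Fin ℓ → Fin k → ZMod q := fun i j c => ((x i j c : ℤ) : ZMod q) with hxb
  have hCv : ∀ (i : Fin t) (j : Fin ℓ) (r : Fin (m+1)),
      (C i j).mulVec (xb i j) r
        = (A i).mulVec ((S i j).mulVec (xb i j)) r
          + ((∑ c, E i j r c * x i j c : ℤ) : ZMod q)
          + μ i j * ∑ c, G r c * xb i j c := by
    intro i j r
    rw [hC, Matrix.add_mulVec, Matrix.add_mulVec, Matrix.smul_mulVec,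
      ← Matrix.mulVec_mulVec]
    simp only [Pi.add_apply, Pi.smul_apply, smul_eq_mul]
    congr 2 <;>
      simp only [Matrix.mulVec, dotProduct, Matrix.map_apply, hxb,
        Finset.mul_sum] <;>
      push_cast <;> rfl
  have hterm : ∀ (i : Fin t) (j : Fin ℓ) (r : Fin (m+1)) (c : Fin k),
      |E i j r c * x i j c| ≤ (B : ℤ) := by
    intro i j r c
    rcases hx01 i j c with h | h <;> simp [h, hE i j r c]
  have hEbnd : ∀ (i : Fin t) (r : Fin (m+1)),
      |∑ j, ∑ c, E i j r c * x i j c| ≤ ((ℓ * k * B : ℕ) : ℤ) := by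
    intro i r
    calc |∑ j, ∑ c, E i j r c * x i j c|
        ≤ ∑ j, |∑ c, E i j r c * x i j c| := Finset.abs_sum_le_sum_abs _ _
      _ ≤ ∑ j : Fin ℓ, ∑ c : Fin k, |E i j r c * x i j c| :=
          Finset.sum_le_sum fun j _ => Finset.abs_sum_le_sum_abs _ _
      _ ≤ ∑ _j : Fin ℓ, ∑ _c : Fin k, (B : ℤ) :=
          Finset.sum_le_sum fun j _ => Finset.sum_le_sum fun c _ => hterm i j r c
      _ = ((ℓ * k * B : ℕ) : ℤ) := by push_cast; simp [mul_assoc]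
  refine ⟨fun p => (∑ j, (S p.1 j).mulVec (xb p.1 j)) p.2,
    Sum.elim (fun p : Fin t × Fin m => ∑ j, ∑ c, E p.1 j p.2.castSucc c * x p.1 j c)
      (fun _ => (∑ i, ∑ j, ∑ c, E i j (Fin.last m) c * x i j c) + e'),
    fun i c => rfl, ?_, fun i r => hEbnd i r.castSucc, ?_⟩
  · funext r
    obtain ⟨i, r⟩ | ⟨⟩ := r
    · -- block rows
      have hAhatrow : Ahat.mulVec (fun p => (∑ j, (S p.1 j).mulVec (xb p.1 j)) p.2)
            (Sum.inl (i, r))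
          = ∑ c, Bmat i r c * (∑ j, (S i j).mulVec (xb i j)) c := by
        simp only [Matrix.mulVec, dotProduct, Fintype.sum_prod_type, hAhat1,
          ite_mul, zero_mul]
        rw [Finset.sum_comm]
        simp
      have hArow : ∑ j, (A i).mulVec ((S i j).mulVec (xb i j)) r.castSucc
          = ∑ c, Bmat i r c * (∑ j, (S i j).mulVec (xb i j)) c := by
        simp only [Matrix.mulVec, dotProduct, hA1, Finset.sum_apply,
          Finset.mul_sum]
        exact Finset.sum_comm
      simp only [Pi.add_apply]
      rw [hw1 i r, hAhatrow]
      simp only [Finset.sum_apply]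
      simp only [show ∀ i j, (fun c => ((x i j c : ℤ) : ZMod q)) = xb i j from fun _ _ => rfl]
      simp only [hCv, hG1, zero_mul, Finset.sum_const_zero, mul_zero, add_zero,
        Sum.elim_inl]
      rw [Finset.sum_add_distrib, hArow]
      push_cast
      simp
    · -- last row
      have hAhatrow : Ahat.mulVec (fun p => (∑ j, (S p.1 j).mulVec (xb p.1 j)) p.2)
            (Sum.inr ())
          = ∑ i, ∑ c, bvec i c * (∑ j, (S i j).mulVec (xb i j)) c := by
        simp only [Matrix.mulVec, dotProduct, Fintype.sum_prod_type, hAhat2]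
      have hArow : ∀ i : Fin t, ∑ j, (A i).mulVec ((S i j).mulVec (xb i j)) (Fin.last m)
          = ∑ c, bvec i c * (∑ j, (S i j).mulVec (xb i j)) c := by
        intro i
        simp only [Matrix.mulVec, dotProduct, hA2, Finset.sum_apply,
          Finset.mul_sum]
        exact Finset.sum_comm
      have hGa : ∀ (i : Fin t) (j : Fin ℓ), (∑ c, G (Fin.last m) c * xb i j c) = a i j := by
        intro i j
        rw [← hgx i j]
        push_cast
        simp only [hG2, hxb]
      simp only [Pi.add_apply]
      rw [hw2, hAhatrow]
      simp only [Finset.sum_apply]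
      simp only [show ∀ i j, (fun c => ((x i j c : ℤ) : ZMod q)) = xb i j from fun _ _ => rfl]
      simp only [hCv, hGa]
      have hμa : ∑ i, ∑ j, μ i j * a i j = (((q : ℤ) / 2 * β + e' : ℤ) : ZMod q) := by
        rw [← hdec]
        simp [mul_comm]
      simp only [Finset.sum_add_distrib]
      rw [hμa, Finset.sum_congr rfl fun i _ => hArow i]
      simp only [Sum.elim_inr]
      push_cast
      try simp only [if_pos rfl]
      push_cast
      simp only [Finset.sum_apply]
      ring
  · have h1 : |(∑ i, ∑ j, ∑ c, E i j (Fin.last m) c * x i j c) + e'|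
        ≤ |∑ i, ∑ j, ∑ c, E i j (Fin.last m) c * x i j c| + |e'| := abs_add_le _ _
    refine le_trans h1 (add_le_add_left ?_ _)
    calc |∑ i, ∑ j, ∑ c, E i j (Fin.last m) c * x i j c|
        ≤ ∑ i, |∑ j, ∑ c, E i j (Fin.last m) c * x i j c| := Finset.abs_sum_le_sum_abs _ _
      _ ≤ ∑ _i : Fin t, ((ℓ * k * B : ℕ) : ℤ) :=
          Finset.sum_le_sum fun i _ => hEbnd i (Fin.last m)
      _ = ((t * ℓ * k * B : ℕ) : ℤ) := by
          rw [Finset.sum_const]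
          push_cast [Finset.card_univ, Fintype.card_fin]
          ring
end

section
/- Let q be a positive even integer, let b ∈ {0,1}, and let e be an integer with 4·|e| < q. Let v ∈ ℤ/qℤ satisfy v = (q/2)·b + ē (bar denoting reduction modulo q). For x ∈ ℤ/qℤ define round(x) ∈ {0,1} by round(x) = 0 if 4·|x̂| < q and round(x) = 1 otherwise, where x̂ is the minimal-absolute-value representative of x. Then the number of elements v₁ ∈ ℤ/qℤ for which round(v₁) XOR round(v − v₁) ≠ b is at most 2·(|e| + 1). Equivalently, if v₁ is sampled uniformly at random from ℤ/qℤ and v₂ := v − v₁, then Pr[round(v₁) ⊕ round(v₂) = b] ≥ 1 − 2·(|e| + 1)/q. -/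
private lemma afs_key (q m e a t s k b : ℤ) (hm : q = 2 * m) (hq : 0 < q)
    (ha : a = e ∨ a = -e) (ha0 : 0 ≤ a) (hae : 4 * a < q) (hb : b = 0 ∨ b = 1)
    (ht1 : -q < 2 * t) (ht2 : 2 * t ≤ q)
    (hs1 : -q < 2 * s) (hs2 : 2 * s ≤ q)
    (hk : s - (m * b + e - t) = q * k)
    (hbad : ((if 4 * |t| < q then (0:ℤ) else 1) + (if 4 * |s| < q then (0:ℤ) else 1)) % 2 ≠ b) :
    ((q + 2*(e-a) + 3)/4 ≤ t ∧ t ≤ (q + 2*(e+a))/4) ∨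
    ((-q + 2*(e-a) + 3)/4 ≤ t ∧ t ≤ (-q + 2*(e+a))/4) := by
  subst hm
  have hea : -a ≤ e ∧ e ≤ a := by rcases ha with h | h <;> omega
  have hkb : k = -1 ∨ k = 0 ∨ k = 1 := by
    have h1 : (2 * m) * (-2) < (2 * m) * k := by
      rcases hb with rfl | rfl <;> nlinarith
    have h2 : (2 * m) * k < (2 * m) * 2 := by
      rcases hb with rfl | rfl <;> nlinarith
    have h1' := lt_of_mul_lt_mul_left h1 (by omega : (0:ℤ) ≤ 2 * m)
    have h2' := lt_of_mul_lt_mul_left h2 (by omega : (0:ℤ) ≤ 2 * m)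
    omega
  rcases abs_cases t with ⟨hT, hT'⟩ | ⟨hT, hT'⟩ <;>
    rcases abs_cases s with ⟨hS, hS'⟩ | ⟨hS, hS'⟩ <;>
      rw [hT, hS] at hbad <;>
        split_ifs at hbad <;>
          rcases hb with rfl | rfl <;>
            rcases hkb with rfl | rfl | rfl <;>
              rcases ha with h | h <;> omega

/-- AFS rounding lemma: for an even modulus `q`, a bit `b ∈ {0,1}` and noise `e` with
`4·|e| < q`, if `v = (q/2)·b + ē` in `ℤ/qℤ`, then the number of shares `v₁ ∈ ℤ/qℤ`
for which `round(v₁) ⊕ round(v − v₁) ≠ b` is at most `2·(|e| + 1)`, where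
`round(x) = 0` if `4·|x̂| < q` and `round(x) = 1` otherwise, `x̂` being the
minimal-absolute-value representative of `x`. -/
theorem afs_rounding
    (q : ℕ) [NeZero q] (hqe : Even q)
    (b : ℤ) (hb : b = 0 ∨ b = 1)
    (e : ℤ) (he : 4 * |e| < (q : ℤ))
    (v : ZMod q) (hv : v = (((q : ℤ) / 2 * b + e : ℤ) : ZMod q)) :
    ((Finset.univ.filter (fun v₁ : ZMod q =>
        ((if 4 * |v₁.valMinAbs| < (q : ℤ) then (0 : ℤ) else 1) +
         (if 4 * |(v - v₁).valMinAbs| < (q : ℤ) then (0 : ℤ) else 1)) % 2 ≠ b)).card : ℤ)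
      ≤ 2 * (|e| + 1) := by
  obtain ⟨mn, hmn⟩ := hqe
  set a : ℤ := |e| with haa
  have ha : a = e ∨ a = -e := abs_choice e
  have ha0 : 0 ≤ a := abs_nonneg e
  set m : ℤ := (mn : ℤ) with hmm
  have hm : (q : ℤ) = 2 * m := by push_cast [hmn]; ring
  have hq : 0 < (q : ℤ) := by exact_mod_cast Nat.pos_of_ne_zero (NeZero.ne q)
  set S : Finset ℤ :=
    Finset.Icc (((q:ℤ) + 2*(e-a) + 3)/4) (((q:ℤ) + 2*(e+a))/4) ∪
    Finset.Icc ((-(q:ℤ) + 2*(e-a) + 3)/4) ((-(q:ℤ) + 2*(e+a))/4) with hS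
  have hcard : (Finset.univ.filter (fun v₁ : ZMod q =>
        ((if 4 * |v₁.valMinAbs| < (q : ℤ) then (0 : ℤ) else 1) +
         (if 4 * |(v - v₁).valMinAbs| < (q : ℤ) then (0 : ℤ) else 1)) % 2 ≠ b)).card ≤ S.card := by
    apply Finset.card_le_card_of_injOn (fun v₁ => v₁.valMinAbs)
    · intro v₁ hv₁
      rw [Finset.mem_coe, Finset.mem_filter] at hv₁
      obtain ⟨-, hbad⟩ := hv₁
      set t : ℤ := v₁.valMinAbs with htdef
      set s : ℤ := (v - v₁).valMinAbs with hsdef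
      have ht1 : -(q:ℤ) < 2 * t := by
        have := v₁.valMinAbs_mem_Ioc.1; rw [← htdef] at this; omega
      have ht2 : 2 * t ≤ (q:ℤ) := by
        have := v₁.valMinAbs_mem_Ioc.2; rw [← htdef] at this; omega
      have hs1 : -(q:ℤ) < 2 * s := by
        have := (v - v₁).valMinAbs_mem_Ioc.1; rw [← hsdef] at this; omega
      have hs2 : 2 * s ≤ (q:ℤ) := by
        have := (v - v₁).valMinAbs_mem_Ioc.2; rw [← hsdef] at this; omega
      have hdvd : (q:ℤ) ∣ s - (m * b + e - t) := by
        rw [← ZMod.intCast_zmod_eq_zero_iff_dvd]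
        push_cast
        rw [hsdef, htdef, ZMod.coe_valMinAbs, ZMod.coe_valMinAbs, hv]
        push_cast
        have h3 : ((q:ℤ)/2) = m := by omega
        rw [h3]
        ring
      obtain ⟨k, hk⟩ := hdvd
      have := afs_key (q : ℤ) m e a t s k b hm hq ha ha0 he hb ht1 ht2 hs1 hs2 hk hbad
      simp only [hS, Finset.mem_coe, Finset.mem_union, Finset.mem_Icc]
      tauto
    · intro x _ y _ h
      exact ZMod.injective_valMinAbs h
  have hScard : (S.card : ℤ) ≤ 2 * (a + 1) := by
    calc (S.card : ℤ) ≤ ((Finset.Icc (((q:ℤ) + 2*(e-a) + 3)/4) (((q:ℤ) + 2*(e+a))/4)).card : ℤ)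
        + ((Finset.Icc ((-(q:ℤ) + 2*(e-a) + 3)/4) ((-(q:ℤ) + 2*(e+a))/4)).card : ℤ) := by
          exact_mod_cast Finset.card_union_le _ _
      _ ≤ 2 * (a + 1) := by
          rw [Int.card_Icc, Int.card_Icc]
          omega
  calc ((Finset.univ.filter _).card : ℤ) ≤ (S.card : ℤ) := by exact_mod_cast hcard
    _ ≤ 2 * (a + 1) := hScard
end
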